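/- Let 𝒳 ⊆ 𝒮 be full additive subcategories of an abelian category 𝒜 with 𝒮 closed under direct summands. For D a bounded-above complex with components in 𝒳 and S a bounded-above complex with components in 𝒮, the localization functor induces an isomorphism of abelian groups Hom_{K^-(𝒮)}(D, S) ≅ Hom_{D^-_𝒳(𝒮)}(D, S), where D^-_𝒳(𝒮) is the Verdier quotient of K^-(𝒮) by the thick subcategory of 𝒳-acyclic complexes. -/

import Mathlib

open CategoryTheory Limits

universe v u

variable {A : Type u} [Category.{v} A] [Abelian A]

/-- A complex `S` is `𝒳`-acyclic if `Hom_𝒜(X, S)` is acyclic for every `X ∈ 𝒳`. -/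
def XAcyclic (𝒳 : Set A) (S : CochainComplex A ℤ) : Prop :=
  ∀ X ∈ 𝒳, ∀ n : ℤ,
    ((((preadditiveCoyoneda.obj (Opposite.op X)).mapHomologicalComplex
      (ComplexShape.up ℤ)).obj S)).ExactAt n

/-- The objects of the bounded-above homotopy category `K^-(𝒮)`, realized as a full
subcategory of the homotopy category of `𝒜`: complexes with components in `𝒮` which are
bounded above. -/
def KminusP (𝒮 : Set A) (K : HomotopyCategory A (ComplexShape.up ℤ)) : Prop :=
  (∀ n : ℤ, K.1.X n ∈ 𝒮) ∧ ∃ b : ℤ, ∀ i : ℤ, b < i → IsZero (K.1.X i)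

/-- The class of `𝒳`-quasi-isomorphisms in `K^-(𝒮)` (the saturated multiplicative system
corresponding to the thick subcategory of `𝒳`-acyclic complexes): morphisms `f` such that
`Hom_𝒜(X, f)` induces isomorphisms on all homology groups for every `X ∈ 𝒳`.
The Verdier quotient `D^-_𝒳(𝒮) = K^-(𝒮)/K^-_𝒳(𝒮)` is the localization of `K^-(𝒮)` at this
class of morphisms. -/
def WXQuasiIso (𝒳 𝒮 : Set A) : MorphismProperty (ObjectProperty.FullSubcategory (KminusP 𝒮)) :=
  fun _ _ f => ∀ X ∈ 𝒳, ∀ n : ℤ,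
    IsIso ((HomotopyCategory.homologyFunctor AddCommGrpCat (ComplexShape.up ℤ) n).map
      (((preadditiveCoyoneda.obj (Opposite.op X)).mapHomotopyCategory
        (ComplexShape.up ℤ)).map ((ObjectProperty.ι (KminusP 𝒮)).map f)))

/-!
If `w : Y ⟶ Z` is an `𝒳`-quasi-isomorphism, its mapping cone is `𝒳`-acyclic. A chain map from
a bounded-above complex `D` with components in `𝒳` to an `𝒳`-acyclic complex is null-homotopic:
the homotopy is built by descending induction on the degree, lifting through the exactness of
`Hom(X, -)` at each step. Hence `Hom_K(D, -)` kills the cone and its shifts, so by the long exact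
sequence of the cone triangle, postcomposition with `w` is bijective on `Hom_K(D, -)`. Thus `D` is
colocal for the class of `𝒳`-quasi-isomorphisms, and morphisms out of a colocal object are not
changed by localization.
-/

universe v₁ u₁

namespace CategoryTheory.MorphismProperty

variable {C : Type u₁} [Category.{v₁} C] {W : MorphismProperty C}

lemma isColocal_inverseImage {C' : Type*} [Category C'] {F : C ⥤ C'} (hF : F.FullyFaithful)
    {W' : MorphismProperty C'} {X : C} (hX : W'.isColocal (F.obj X)) :
    (W'.inverseImage F).isColocal X := fun Y _ g hg => by
  have h : (fun f : X ⟶ Y => f ≫ g) =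
      hF.homEquiv.symm ∘ (fun f => f ≫ F.map g) ∘ hF.homEquiv := by
    funext f
    exact hF.map_injective (by simp)
  rw [h]
  exact hF.homEquiv.symm.bijective.comp ((hX _ hg).comp hF.homEquiv.bijective)

lemma isColocal.isInvertedBy_coyoneda {X : C} (hX : W.isColocal X) :
    W.IsInvertedBy (coyoneda.obj (Opposite.op X) ⋙ uliftFunctor.{u₁}) := fun _ _ w hw => by
  rw [isIso_iff_bijective]
  exact Equiv.ulift.symm.bijective.comp ((hX w hw).comp Equiv.ulift.bijective)

/- `Hom(X, -)` descends to a functor `G'` on the localization; evaluating `G'` at the class `e`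
of `𝟙 X` is a map `Hom(Q X, -) → G'` which is split injective (the splitting comes from
`W.Q.map` by the universal property) and whose composite with `W.Q.map` is bijective. -/
lemma isColocal.bijective_Q_map {X : C} (hX : W.isColocal X) (Y : C) :
    Function.Bijective (W.Q.map : (X ⟶ Y) → (W.Q.obj X ⟶ W.Q.obj Y)) := by
  let G := coyoneda.obj (Opposite.op X) ⋙ uliftFunctor.{u₁}
  let G' := Localization.lift G hX.isInvertedBy_coyoneda W.Q
  let ι : W.Q ⋙ G' ≅ G := Localization.Lifting.iso W.Q W G G'
  let u : G.obj X := ULift.up (𝟙 X)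
  let e : G'.obj (W.Q.obj X) := ι.inv.app X u
  let H := coyoneda.obj (Opposite.op (W.Q.obj X))
  let τ : G ⟶ W.Q ⋙ H :=
    { app _ := TypeCat.ofHom fun g => W.Q.map g.down
      naturality _ _ f := by ext g; exact W.Q.map_comp g.down f }
  let τ' : G' ⟶ H := Localization.liftNatTrans W.Q W G (W.Q ⋙ H) G' H τ
  have hτ'e : τ'.app _ e = 𝟙 _ := by
    have h := ConcreteCategory.congr_hom
      (Localization.liftNatTrans_app W.Q W G (W.Q ⋙ H) G' H τ X) e
    have hι := ConcreteCategory.congr_hom (ι.inv_hom_id_app X) u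
    dsimp [τ'] at h hι ⊢
    rw [h, hι]
    exact W.Q.map_id X
  let ψ : (W.Q.obj X ⟶ W.Q.obj Y) → G'.obj (W.Q.obj Y) := fun φ => G'.map φ e
  have hψ : Function.Injective ψ := by
    refine Function.LeftInverse.injective (g := τ'.app _) fun φ => ?_
    have h := NatTrans.naturality_apply τ' φ e
    dsimp at h ⊢
    rw [h, hτ'e]
    exact Category.id_comp φ
  have hψQ : ψ ∘ W.Q.map = (ι.app Y).inv ∘ (ULift.up : (X ⟶ Y) → G.obj Y) := by
    funext f
    exact (NatTrans.naturality_apply ι.inv f u).symm.trans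
      (congrArg (ι.inv.app Y) (ULift.ext (G.map f u) (ULift.up f) (Category.id_comp f)))
  have hb : Function.Bijective (ψ ∘ W.Q.map) := by
    rw [hψQ]
    exact (ι.app Y).symm.toEquiv.bijective.comp Equiv.ulift.symm.bijective
  exact ⟨hb.1.of_comp, hb.2.of_comp_left hψ⟩

end CategoryTheory.MorphismProperty

section Complexes

variable {𝒳 : Set A}

lemma XAcyclic.exists_comp_d_eq {C : CochainComplex A ℤ} (hC : XAcyclic 𝒳 C) {X : A}
    (hX : X ∈ 𝒳) {n : ℤ} (g : X ⟶ C.X n) (hg : g ≫ C.d n (n + 1) = 0) :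
    ∃ s : X ⟶ C.X (n - 1), s ≫ C.d (n - 1) n = g := by
  have h := hC X hX n
  rw [HomologicalComplex.exactAt_iff' _ (n - 1) n (n + 1) (by simp) (by simp)] at h
  exact (ShortComplex.ab_exact_iff _).1 h g hg

lemma xAcyclic_iff_mem_subcategoryAcyclic (C : CochainComplex A ℤ) :
    XAcyclic 𝒳 C ↔ ∀ X ∈ 𝒳, HomotopyCategory.subcategoryAcyclic AddCommGrpCat
      ((HomotopyCategory.quotient _ _).obj
        (((preadditiveCoyoneda.obj (Opposite.op X)).mapHomologicalComplex _).obj C)) := by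
  simp only [XAcyclic, HomotopyCategory.quotient_obj_mem_subcategoryAcyclic_iff_exactAt]

lemma XAcyclic.shift {C : CochainComplex A ℤ} (hC : XAcyclic 𝒳 C) (k : ℤ) :
    XAcyclic 𝒳 (C⟦k⟧) := by
  rw [xAcyclic_iff_mem_subcategoryAcyclic] at hC ⊢
  intro X hX
  let F := (preadditiveCoyoneda.obj (Opposite.op X)).mapHomologicalComplex (ComplexShape.up ℤ)
  let Q := HomotopyCategory.quotient AddCommGrpCat (ComplexShape.up ℤ)
  exact ObjectProperty.prop_of_iso _
    (((Q.commShiftIso k).app (F.obj C)).symm ≪≫ Q.mapIso ((F.commShiftIso k).app C).symm)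
    ((HomotopyCategory.subcategoryAcyclic _).le_shift k _ (hC X hX))

variable {D C : CochainComplex A ℤ} (hD : ∀ n : ℤ, D.X n ∈ 𝒳) {b : ℤ}
  (hb : ∀ i : ℤ, b < i → IsZero (D.X i)) (hC : XAcyclic 𝒳 C)

/- Descending induction from `b`: the step in degree `n` is `s n : D.X n ⟶ C.X (n - 1)` paired
with `s (n + 1)` reindexed to land in `C.X n`, subject to the homotopy identity in degree `n`. -/
noncomputable def nullHomotopyStep (f : D ⟶ C) (n : ℤ) :
    {p : (D.X n ⟶ C.X (n - 1)) × (D.X (n + 1) ⟶ C.X n) //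
      f.f n = D.d n (n + 1) ≫ p.2 + p.1 ≫ C.d (n - 1) n} :=
  if h : b < n then
    ⟨(0, 0), by simp [(hb n h).eq_of_src (f.f n) 0]⟩
  else
    let s := (nullHomotopyStep f (n + 1)).1.1 ≫ (C.XIsoOfEq (by omega : n + 1 - 1 = n)).hom
    have hcycle : (f.f n - D.d n (n + 1) ≫ s) ≫ C.d n (n + 1) = 0 := by
      have hs : s ≫ C.d n (n + 1) =
          (nullHomotopyStep f (n + 1)).1.1 ≫ C.d (n + 1 - 1) (n + 1) := by
        simp [s, HomologicalComplex.XIsoOfEq_hom_comp_d]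
      simp only [Preadditive.sub_comp, Category.assoc, f.comm, hs,
        (nullHomotopyStep f (n + 1)).2, Preadditive.comp_add]
      simp [HomologicalComplex.d_comp_d_assoc]
    let hlift := hC.exists_comp_d_eq (hD n) _ hcycle
    ⟨(hlift.choose, s), by rw [hlift.choose_spec]; abel⟩
termination_by (b + 1 - n).toNat
decreasing_by omega

lemma nullHomotopyStep_snd (f : D ⟶ C) (n : ℤ) :
    (nullHomotopyStep hD hb hC f n).1.2 =
      (nullHomotopyStep hD hb hC f (n + 1)).1.1 ≫ (C.XIsoOfEq (by omega : n + 1 - 1 = n)).hom := by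
  rw [nullHomotopyStep]
  split
  · rw [nullHomotopyStep, dif_pos (by omega : b < n + 1)]
    simp
  · rfl

noncomputable def nullHomotopyOfXAcyclic (f : D ⟶ C) : Homotopy f 0 where
  hom i j :=
    if h : j = i - 1 then (nullHomotopyStep hD hb hC f i).1.1 ≫ (C.XIsoOfEq h.symm).hom else 0
  zero i j hij := dif_neg (fun h => hij (by simp [h]))
  comm i := by
    rw [dNext_eq _ (show (ComplexShape.up ℤ).Rel i (i + 1) by simp),
      prevD_eq _ (show (ComplexShape.up ℤ).Rel (i - 1) i by simp),
      dif_pos (by omega : i = i + 1 - 1), dif_pos rfl]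
    simp only [HomologicalComplex.XIsoOfEq_rfl, Iso.refl_hom, Category.comp_id]
    conv_lhs => rw [(nullHomotopyStep hD hb hC f i).2, nullHomotopyStep_snd hD hb hC f i]
    simp

include hD hb hC

lemma quotient_map_eq_zero_of_xAcyclic
    (φ : (HomotopyCategory.quotient A (ComplexShape.up ℤ)).obj D ⟶
      (HomotopyCategory.quotient A (ComplexShape.up ℤ)).obj C) : φ = 0 := by
  obtain ⟨f, rfl⟩ := (HomotopyCategory.quotient A _).map_surjective φ
  rw [HomotopyCategory.eq_of_homotopy f 0 (nullHomotopyOfXAcyclic hD hb hC f), Functor.map_zero]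

lemma quotient_map_shift_eq_zero_of_xAcyclic (n : ℤ)
    (φ : (HomotopyCategory.quotient A (ComplexShape.up ℤ)).obj D ⟶
      ((HomotopyCategory.quotient A (ComplexShape.up ℤ)).obj C)⟦n⟧) : φ = 0 := by
  rw [← cancel_mono (((HomotopyCategory.quotient A _).commShiftIso n).app C).inv, zero_comp]
  exact quotient_map_eq_zero_of_xAcyclic hD hb (hC.shift n) _

end Complexes

def XQuasiIso (𝒳 : Set A) : MorphismProperty (HomotopyCategory A (ComplexShape.up ℤ)) :=
  fun _ _ w => ∀ X ∈ 𝒳, ∀ n : ℤ,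
    IsIso ((HomotopyCategory.homologyFunctor AddCommGrpCat (ComplexShape.up ℤ) n).map
      (((preadditiveCoyoneda.obj (Opposite.op X)).mapHomotopyCategory (ComplexShape.up ℤ)).map w))

lemma xAcyclic_mappingCone {𝒳 : Set A} {Y Z : CochainComplex A ℤ} (w : Y ⟶ Z)
    (hw : XQuasiIso 𝒳 ((HomotopyCategory.quotient A (ComplexShape.up ℤ)).map w)) :
    XAcyclic 𝒳 (CochainComplex.mappingCone w) := by
  rw [xAcyclic_iff_mem_subcategoryAcyclic]
  intro X hX
  let F := preadditiveCoyoneda.obj (Opposite.op X)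
  have hqis : HomotopyCategory.quasiIso _ (ComplexShape.up ℤ)
      ((HomotopyCategory.quotient _ _).map ((F.mapHomologicalComplex _).map w)) := hw X hX
  rw [HomotopyCategory.quasiIso_eq_trW_subcategoryAcyclic] at hqis
  exact ObjectProperty.prop_of_iso _
    ((HomotopyCategory.quotient _ _).mapIso
      (CochainComplex.mappingCone.mapHomologicalComplexIso w F).symm)
    (((HomotopyCategory.subcategoryAcyclic _).trW_iff_of_distinguished _
      (HomotopyCategory.mappingCone_triangleh_distinguished _)).1 hqis)

open Pretriangulated in
lemma isColocal_xQuasiIso {𝒳 : Set A} {D : CochainComplex A ℤ} (hD : ∀ n : ℤ, D.X n ∈ 𝒳)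
    {b : ℤ} (hb : ∀ i : ℤ, b < i → IsZero (D.X i)) :
    (XQuasiIso 𝒳).isColocal ((HomotopyCategory.quotient A (ComplexShape.up ℤ)).obj D) := by
  intro Y Z w hw
  obtain ⟨Y, rfl⟩ := HomotopyCategory.quotient_obj_surjective Y
  obtain ⟨Z, rfl⟩ := HomotopyCategory.quotient_obj_surjective Z
  obtain ⟨w, rfl⟩ := (HomotopyCategory.quotient A _).map_surjective w
  have hcone := xAcyclic_mappingCone w hw
  have hT := HomotopyCategory.mappingCone_triangleh_distinguished w
  refine ⟨fun α₁ α₂ hα => ?_, fun β => ?_⟩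
  · suffices ∀ α, α ≫ (HomotopyCategory.quotient A _).map w = 0 → α = 0 from
      sub_eq_zero.1 (this _ (by rw [Preadditive.sub_comp, sub_eq_zero]; exact hα))
    intro α hα
    obtain ⟨γ, rfl⟩ := Triangle.coyoneda_exact₂ _ (inv_rot_of_distTriang _ hT) α hα
    rw [quotient_map_shift_eq_zero_of_xAcyclic hD hb hcone (-1) γ]
    exact zero_comp
  · obtain ⟨α, hα⟩ := Triangle.coyoneda_exact₂ _ hT β
      (quotient_map_eq_zero_of_xAcyclic hD hb hcone _)
    exact ⟨α, hα.symm⟩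

theorem stmt_5_general (𝒳 𝒮 : Set A)
    (D S : ObjectProperty.FullSubcategory (KminusP 𝒮))
    (hD : ∀ n : ℤ, D.1.1.X n ∈ 𝒳) :
    Function.Bijective (fun f : D ⟶ S => (WXQuasiIso 𝒳 𝒮).Q.map f) := by
  obtain ⟨b, hb⟩ := D.2.2
  have hD' : (WXQuasiIso 𝒳 𝒮).isColocal D :=
    MorphismProperty.isColocal_inverseImage (W' := XQuasiIso 𝒳)
      (ObjectProperty.fullyFaithfulι _) (isColocal_xQuasiIso hD hb)
  exact hD'.bijective_Q_map S

/-- Lemma 3.7: for `𝒳 ⊆ 𝒮`, a bounded-above complex `D` with components in `𝒳` and a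
bounded-above complex `S` with components in `𝒮`, the localization functor induces a
bijection `Hom_{K^-(𝒮)}(D, S) ≅ Hom_{D^-_𝒳(𝒮)}(D, S)`. -/
theorem stmt_5 (𝒳 𝒮 : Set A) (h𝒳𝒮 : 𝒳 ⊆ 𝒮)
    (hzero : ∀ Z : A, IsZero Z → Z ∈ 𝒳)
    (hsummand : ∀ X Y : A, (X ⊞ Y) ∈ 𝒮 → X ∈ 𝒮)
    (D S : ObjectProperty.FullSubcategory (KminusP 𝒮))
    (hD : ∀ n : ℤ, D.1.1.X n ∈ 𝒳) :
    Function.Bijective (fun f : D ⟶ S => (WXQuasiIso 𝒳 𝒮).Q.map f) :=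
  stmt_5_general 𝒳 𝒮 D S hD
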